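/- arXiv:2009.01363 — 2 statements merged into one kernel-verified Lean document; each statement's English description precedes it below -/
import Mathlib

section
/- Let σ, α ∈ ℝ³ be unit vectors and γ₊, γ̃₊ ∈ ℝ³. Define γ = ½(γ₊ + γ̃₊) + ½((γ₊ − γ̃₊)·σ) α and γ̃ = ½(γ₊ + γ̃₊) − ½((γ₊ − γ̃₊)·σ) α. Then |γ|² + |γ̃|² ≤ |γ₊|² + |γ̃₊|², with equality if and only if γ₊ − γ̃₊ is parallel to σ. In particular, the adjoint DSMC backward step is non-expansive in the ℓ² sense. -/
set_option maxHeartbeats 1000000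


open scoped RealInnerProductSpace

noncomputable section

abbrev E3 := EuclideanSpace ℝ (Fin 3)

theorem adjoint_step_nonexpansive (σ α γp γtp : E3) (hσ : ‖σ‖ = 1) (hα : ‖α‖ = 1)
    (γ γt : E3)
    (hγ : γ = (1/2 : ℝ) • (γp + γtp) + ((1/2 : ℝ) * ⟪γp - γtp, σ⟫) • α)
    (hγt : γt = (1/2 : ℝ) • (γp + γtp) - ((1/2 : ℝ) * ⟪γp - γtp, σ⟫) • α) :
    ‖γ‖^2 + ‖γt‖^2 ≤ ‖γp‖^2 + ‖γtp‖^2 ∧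
    (‖γ‖^2 + ‖γt‖^2 = ‖γp‖^2 + ‖γtp‖^2 ↔ ∃ t : ℝ, γp - γtp = t • σ) := by
  set d : E3 := γp - γtp with hd
  set s : E3 := γp + γtp with hs
  set a : E3 := (1/2 : ℝ) • s with ha
  set b : E3 := ((1/2 : ℝ) * ⟪d, σ⟫) • α with hb
  have hna : ‖a‖^2 = ‖s‖^2 / 4 := by
    rw [ha, norm_smul]
    simp [mul_pow]
    ring
  have hnb : ‖b‖^2 = ⟪d, σ⟫^2 / 4 := by
    rw [hb, norm_smul, mul_pow, Real.norm_eq_abs, sq_abs, hα]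
    ring
  have key1 : ‖γ‖^2 + ‖γt‖^2 = ‖s‖^2 / 2 + ⟪d, σ⟫^2 / 2 := by
    rw [hγ, hγt, norm_add_sq_real a b, norm_sub_sq_real a b, hna, hnb]
    ring
  have key2 : ‖γp‖^2 + ‖γtp‖^2 = ‖s‖^2 / 2 + ‖d‖^2 / 2 := by
    have h1 := norm_add_sq_real γp γtp
    have h2 := norm_sub_sq_real γp γtp
    rw [← hs] at h1; rw [← hd] at h2
    nlinarith [h1, h2]
  have hcs : |⟪d, σ⟫| ≤ ‖d‖ := by
    have := abs_real_inner_le_norm d σ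
    rwa [hσ, mul_one] at this
  have hcs2 : ⟪d, σ⟫^2 ≤ ‖d‖^2 := by
    calc ⟪d, σ⟫^2 = |⟪d, σ⟫|^2 := (sq_abs _).symm
      _ ≤ ‖d‖^2 := by nlinarith [abs_nonneg (⟪d, σ⟫ : ℝ), norm_nonneg d]
  clear_value d s a b
  constructor
  · rw [key1, key2]; linarith
  · rw [key1, key2]
    constructor
    · intro h
      have heq : ⟪d, σ⟫^2 = ‖d‖^2 := by linarith
      have habs : |⟪d, σ⟫| = ‖d‖ := by
        have h1 : |⟪d, σ⟫|^2 = ‖d‖^2 := by rw [sq_abs]; exact heq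
        nlinarith [abs_nonneg (⟪d, σ⟫ : ℝ), norm_nonneg d]
      rcases (abs_eq (norm_nonneg d)).mp habs with hp | hn
      · have h2 : ⟪d, σ⟫ = ‖d‖ * ‖σ‖ := by rw [hp, hσ, mul_one]
        have h3 := inner_eq_norm_mul_iff_real.mp h2
        rw [hσ, one_smul] at h3
        exact ⟨‖d‖, h3⟩
      · have h2 : ⟪-d, σ⟫ = ‖-d‖ * ‖σ‖ := by
          rw [inner_neg_left, hn, norm_neg, hσ]; ring
        have h3 := inner_eq_norm_mul_iff_real.mp h2
        rw [hσ, one_smul, norm_neg] at h3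
        refine ⟨-‖d‖, ?_⟩
        rw [neg_smul, ← h3, neg_neg]
    · rintro ⟨t, ht⟩
      have h4 : ⟪d, σ⟫ = t := by
        rw [ht, real_inner_smul_left, real_inner_self_eq_norm_sq, hσ]
        ring
      have hnd : ‖d‖ = |t| := by
        rw [ht, norm_smul, hσ, mul_one, Real.norm_eq_abs]
      rw [h4, hnd, sq_abs]
end
end

section
/- Composition identity for collision matrices: for unit vectors σ, α ∈ ℝ³, the product A(σ,α) A(α,σ) restricted to the subspace {(x,y) ∈ ℝ³ × ℝ³ : x − y ∈ span(σ)} is the identity. Concretely, if x − y = t σ for some t ∈ ℝ, then A(σ,α)(A(α,σ)(x,y)) = (x, y). -/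
open scoped RealInnerProductSpace

noncomputable section

/-- The linear collision map `A(σ,α)` on `ℝ³ × ℝ³`. -/
def colA (σ α : E3) (p : E3 × E3) : E3 × E3 :=
  ((1/2 : ℝ) • (p.1 + p.2 + ⟪α, p.1 - p.2⟫ • σ),
   (1/2 : ℝ) • (p.1 + p.2 - ⟪α, p.1 - p.2⟫ • σ))

theorem composition_identity_on_subspace (σ α : E3) (hσ : ‖σ‖ = 1) (hα : ‖α‖ = 1)
    (x y : E3) (t : ℝ) (hxy : x - y = t • σ) :
    colA σ α (colA α σ (x, y)) = (x, y) := by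
  have hσσ : ⟪σ, σ⟫ = 1 := by
    rw [real_inner_self_eq_norm_sq, hσ]; norm_num
  have hαα : ⟪α, α⟫ = 1 := by
    rw [real_inner_self_eq_norm_sq, hα]; norm_num
  have h1 : ⟪σ, x - y⟫ = t := by
    rw [hxy, real_inner_smul_right, hσσ, mul_one]
  simp only [colA]
  rw [h1]
  have hd : (1/2 : ℝ) • (x + y + t • α) - (1/2 : ℝ) • (x + y - t • α) = t • α := by
    rw [← smul_sub]; module
  rw [hd, real_inner_smul_right, hαα, mul_one]
  rw [Prod.mk.injEq]
  constructor
  · show (1/2:ℝ) • ((1/2:ℝ) • (x + y + t • α) + (1/2:ℝ) • (x + y - t • α) + t • σ) = x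
    rw [← hxy]; module
  · show (1/2:ℝ) • ((1/2:ℝ) • (x + y + t • α) + (1/2:ℝ) • (x + y - t • α) - t • σ) = y
    rw [← hxy]; module
end
end
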